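/- arXiv:1112.0547 — 2 statements merged into one kernel-verified Lean document; each statement's English description precedes it below -/
import Mathlib

section
/- Let skew : ℝ³ → M₃(ℝ) be the map with skew(ξ)x = ξ × x and let cay(ξ) := (I + skew(ξ)/2)(I − skew(ξ)/2)⁻¹. For every ξ ∈ ℝ³ there exists a constant C ≥ 0 such that for all t ∈ [−1, 1], ‖cay(tξ) − exp(skew(tξ))‖ ≤ C|t|³, where exp is the matrix exponential. That is, the Cayley transform is a second order approximation of the matrix exponential of SO(3). -/
open Matrix

noncomputable section

attribute [local instance] Matrix.normedAddCommGroup Matrix.normedSpace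

/-- `skew3 ξ` is the skew-symmetric matrix with `skew3 ξ *ᵥ x = ξ × x`. -/
def skew3 (ξ : Fin 3 → ℝ) : Matrix (Fin 3) (Fin 3) ℝ :=
  !![0, -ξ 2, ξ 1; ξ 2, 0, -ξ 0; -ξ 1, ξ 0, 0]

/-- The Cayley transform `cay ξ = (I + skew ξ / 2) (I − skew ξ / 2)⁻¹`. -/
def cay (ξ : Fin 3 → ℝ) : Matrix (Fin 3) (Fin 3) ℝ :=
  (1 + (2⁻¹ : ℝ) • skew3 ξ) * (1 - (2⁻¹ : ℝ) • skew3 ξ)⁻¹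

/-! The Cayley transform satisfies the exact identity
`(1 + B/2) (1 - B/2)⁻¹ = 1 + B + B²/2 + B³ (1 - B/2)⁻¹ / 4`, and `1 - B/2` is invertible for every
`B = skew3 η` (its determinant is `1 + |η/2|²`). For `B = t • skew3 ξ` the inverse depends
continuously on `t`, so it is bounded on `[-1, 1]` and the last term is `O(|t|³)`. The exponential
differs from the same Taylor polynomial `1 + B + B²/2` by the tail `∑_{i ≥ 3} B^i / i!`, which is
`O(|t|³)` as well; since the entrywise sup norm is not submultiplicative, the tail is bounded
through `‖B ^ i‖ ≤ (n ‖B‖) ^ i` for `n × n` matrices. -/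

open scoped Nat

namespace Matrix

variable {l m n α : Type*} [Fintype l] [Fintype m] [Fintype n]

theorem norm_mul_le_card_mul [NormedRing α] (A : Matrix l m α) (B : Matrix m n α) :
    ‖A * B‖ ≤ Fintype.card m * ‖A‖ * ‖B‖ := by
  refine (norm_le_iff (by positivity)).2 fun i k => ?_
  calc ‖(A * B) i k‖ ≤ ∑ j, ‖A i j‖ * ‖B j k‖ :=
        (norm_sum_le _ _).trans (Finset.sum_le_sum fun j _ => norm_mul_le _ _)
    _ ≤ ∑ _j : m, ‖A‖ * ‖B‖ := by
        gcongr with j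
        exacts [norm_entry_le_entrywise_sup_norm A, norm_entry_le_entrywise_sup_norm B]
    _ = Fintype.card m * ‖A‖ * ‖B‖ := by
        rw [Finset.sum_const, nsmul_eq_mul, Finset.card_univ, mul_assoc]

theorem norm_pow_le_card_mul_pow [DecidableEq n] [NormedRing α] [NormOneClass α]
    (A : Matrix n n α) (k : ℕ) : ‖A ^ k‖ ≤ (Fintype.card n * ‖A‖) ^ k := by
  induction k with
  | zero =>
    rw [pow_zero, pow_zero, ← diagonal_one, norm_diagonal]
    exact pi_norm_le_iff_of_nonneg zero_le_one |>.2 fun _ => norm_one.le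
  | succ k ih =>
    calc ‖A ^ (k + 1)‖ ≤ Fintype.card n * ‖A ^ k‖ * ‖A‖ := by
          rw [pow_succ]; exact norm_mul_le_card_mul _ _
      _ ≤ Fintype.card n * (Fintype.card n * ‖A‖) ^ k * ‖A‖ := by gcongr
      _ = (Fintype.card n * ‖A‖) ^ (k + 1) := by ring

theorem norm_exp_sub_sum_range_le [DecidableEq n] (A : Matrix n n ℝ) (k : ℕ) :
    ‖NormedSpace.exp A - ∑ i ∈ Finset.range k, (i ! : ℝ)⁻¹ • A ^ i‖
      ≤ (Fintype.card n * ‖A‖) ^ k * Real.exp (Fintype.card n * ‖A‖) := by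
  set r := Fintype.card n * ‖A‖
  have hterm : ∀ i, ‖(i ! : ℝ)⁻¹ • A ^ i‖ ≤ r ^ i / i ! := fun i => by
    rw [norm_smul, norm_inv, RCLike.norm_natCast, inv_mul_eq_div]
    gcongr
    exact norm_pow_le_card_mul_pow A i
  have hsum : Summable fun i => (i ! : ℝ)⁻¹ • A ^ i :=
    .of_norm_bounded (Real.summable_pow_div_factorial r) hterm
  rw [congrFun (NormedSpace.exp_eq_tsum ℝ) A, ← hsum.sum_add_tsum_nat_add k, add_sub_cancel_left,
    Real.exp_eq_exp_ℝ]
  refine tsum_of_norm_bounded ((NormedSpace.expSeries_div_hasSum_exp r).mul_left (r ^ k))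
    fun i => (hterm (i + k)).trans ?_
  calc r ^ (i + k) / (i + k)! ≤ r ^ (i + k) / i ! := by
        gcongr
        exact Nat.le_add_right i k
    _ = r ^ k * (r ^ i / i !) := by ring

theorem norm_exp_smul_sub_sum_range_le [DecidableEq n] (A : Matrix n n ℝ) (k : ℕ) {t : ℝ}
    (ht : |t| ≤ 1) :
    ‖NormedSpace.exp (t • A) - ∑ i ∈ Finset.range k, (i ! : ℝ)⁻¹ • (t • A) ^ i‖
      ≤ (Fintype.card n * ‖A‖) ^ k * Real.exp (Fintype.card n * ‖A‖) * |t| ^ k := by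
  refine (norm_exp_sub_sum_range_le (t • A) k).trans ?_
  rw [norm_smul, Real.norm_eq_abs]
  calc (Fintype.card n * (|t| * ‖A‖)) ^ k * Real.exp (Fintype.card n * (|t| * ‖A‖))
      ≤ (Fintype.card n * (|t| * ‖A‖)) ^ k * Real.exp (Fintype.card n * ‖A‖) := by
        gcongr
        exact mul_le_of_le_one_left (norm_nonneg A) ht
    _ = (Fintype.card n * ‖A‖) ^ k * Real.exp (Fintype.card n * ‖A‖) * |t| ^ k := by ring

theorem one_add_half_smul_mul_inv_one_sub_half_smul [DecidableEq n] {K : Type*} [Field K]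
    [CharZero K]
    (B : Matrix n n K) (hB : IsUnit (1 - (2⁻¹ : K) • B).det) :
    (1 + (2⁻¹ : K) • B) * (1 - (2⁻¹ : K) • B)⁻¹
      = 1 + B + (2⁻¹ : K) • B ^ 2 + (4⁻¹ : K) • (B ^ 3 * (1 - (2⁻¹ : K) • B)⁻¹) := by
  have hfactor : 1 + (2⁻¹ : K) • B
      = (1 + B + (2⁻¹ : K) • B ^ 2) * (1 - (2⁻¹ : K) • B) + (4⁻¹ : K) • B ^ 3 := by
    have hB3 : B ^ 2 * B = B ^ 3 := (pow_succ B 2).symm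
    simp only [add_mul, one_mul, mul_sub, mul_one, mul_smul_comm, smul_mul_assoc, ← sq, hB3]
    module
  rw [hfactor, add_mul, mul_assoc, mul_nonsing_inv _ hB, mul_one, smul_mul_assoc]

end Matrix

theorem skew3_smul (t : ℝ) (ξ : Fin 3 → ℝ) : skew3 (t • ξ) = t • skew3 ξ := by
  ext i j
  fin_cases i <;> fin_cases j <;> simp [skew3]

theorem det_one_sub_skew3 (ξ : Fin 3 → ℝ) :
    (1 - skew3 ξ).det = 1 + ξ 0 ^ 2 + ξ 1 ^ 2 + ξ 2 ^ 2 := by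
  simp only [skew3, det_fin_three, Matrix.sub_apply, one_apply, of_apply, cons_val', cons_val_zero,
    cons_val_fin_one, cons_val_one, cons_val, Fin.isValue, Fin.reduceEq, ↓reduceIte, sub_zero,
    mul_one, sub_neg_eq_add, zero_add, one_mul, zero_sub, mul_neg, neg_mul, neg_neg]
  ring

theorem isUnit_det_one_sub_half_skew3 (ξ : Fin 3 → ℝ) :
    IsUnit (1 - (2⁻¹ : ℝ) • skew3 ξ).det := by
  rw [← skew3_smul, det_one_sub_skew3, isUnit_iff_ne_zero]
  positivity

theorem cay_eq (ξ : Fin 3 → ℝ) :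
    cay ξ = 1 + skew3 ξ + (2⁻¹ : ℝ) • skew3 ξ ^ 2
      + (4⁻¹ : ℝ) • (skew3 ξ ^ 3 * (1 - (2⁻¹ : ℝ) • skew3 ξ)⁻¹) :=
  one_add_half_smul_mul_inv_one_sub_half_smul _ (isUnit_det_one_sub_half_skew3 ξ)

theorem continuous_inv_one_sub_half_skew3_smul (ξ : Fin 3 → ℝ) :
    Continuous fun t : ℝ => (1 - (2⁻¹ : ℝ) • skew3 (t • ξ))⁻¹ := by
  refine continuous_iff_continuousAt.2 fun t => ContinuousAt.comp ?_ ?_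
  · refine continuousAt_matrix_inv _ ?_
    rw [Ring.inverse_eq_inv']
    exact continuousAt_inv₀ (isUnit_det_one_sub_half_skew3 _).ne_zero
  · simp only [skew3_smul]
    fun_prop

theorem exists_norm_cay_smul_sub_le (ξ : Fin 3 → ℝ) :
    ∃ M, 0 ≤ M ∧ ∀ t ∈ Set.Icc (-1 : ℝ) 1,
      ‖cay (t • ξ) - (1 + skew3 (t • ξ) + (2⁻¹ : ℝ) • skew3 (t • ξ) ^ 2)‖ ≤ M * |t| ^ 3 := by
  set R := fun t : ℝ => skew3 ξ ^ 3 * (1 - (2⁻¹ : ℝ) • skew3 (t • ξ))⁻¹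
  have hR : Continuous R := continuous_const.mul (continuous_inv_one_sub_half_skew3_smul ξ)
  obtain ⟨M, hM⟩ :=
    (isCompact_Icc (a := -1) (b := 1)).exists_bound_of_continuousOn hR.continuousOn
  have hM0 : 0 ≤ M := (norm_nonneg _).trans (hM 0 ⟨by norm_num, by norm_num⟩)
  refine ⟨4⁻¹ * M, by positivity, fun t ht => ?_⟩
  have hcube : skew3 (t • ξ) ^ 3 = t ^ 3 • skew3 ξ ^ 3 := by rw [skew3_smul, smul_pow]
  have hrem : cay (t • ξ) - (1 + skew3 (t • ξ) + (2⁻¹ : ℝ) • skew3 (t • ξ) ^ 2)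
      = (4⁻¹ * t ^ 3) • R t := by
    rw [cay_eq, add_sub_cancel_left, hcube, smul_mul_assoc, smul_smul]
  calc ‖cay (t • ξ) - (1 + skew3 (t • ξ) + (2⁻¹ : ℝ) • skew3 (t • ξ) ^ 2)‖
      = 4⁻¹ * |t| ^ 3 * ‖R t‖ := by simp [hrem, norm_smul]
    _ ≤ 4⁻¹ * |t| ^ 3 * M := by gcongr; exact hM t ht
    _ = 4⁻¹ * M * |t| ^ 3 := by ring

/-- The Cayley transform is a second order approximation of the matrix exponential of
`SO(3)`: for every `ξ` there is `C ≥ 0` with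
`‖cay (tξ) − exp (skew (tξ))‖ ≤ C |t|³` for all `t ∈ [−1, 1]`. -/
theorem cayley_second_order_approx_exp (ξ : Fin 3 → ℝ) :
    ∃ C : ℝ, 0 ≤ C ∧ ∀ t ∈ Set.Icc (-1 : ℝ) 1,
      ‖cay (t • ξ) - NormedSpace.exp (skew3 (t • ξ))‖ ≤ C * |t| ^ 3 := by
  set A := skew3 ξ
  obtain ⟨M, hM0, hcay⟩ := exists_norm_cay_smul_sub_le ξ
  refine ⟨M + (3 * ‖A‖) ^ 3 * Real.exp (3 * ‖A‖), by positivity, fun t ht => ?_⟩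
  have hexp := norm_exp_smul_sub_sum_range_le A 3 (abs_le.2 ht)
  have htaylor : ∑ i ∈ Finset.range 3, (i ! : ℝ)⁻¹ • (t • A) ^ i
      = 1 + skew3 (t • ξ) + (2⁻¹ : ℝ) • skew3 (t • ξ) ^ 2 := by
    simp [Finset.sum_range_succ, skew3_smul, A]
  rw [htaylor, Fintype.card_fin, ← skew3_smul, norm_sub_rev] at hexp
  calc ‖cay (t • ξ) - NormedSpace.exp (skew3 (t • ξ))‖
      ≤ ‖cay (t • ξ) - (1 + skew3 (t • ξ) + (2⁻¹ : ℝ) • skew3 (t • ξ) ^ 2)‖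
        + ‖1 + skew3 (t • ξ) + (2⁻¹ : ℝ) • skew3 (t • ξ) ^ 2 - NormedSpace.exp (skew3 (t • ξ))‖ :=
        norm_sub_le_norm_sub_add_norm_sub _ _ _
    _ ≤ M * |t| ^ 3 + (3 * ‖A‖) ^ 3 * Real.exp (3 * ‖A‖) * |t| ^ 3 := add_le_add (hcay t ht) hexp
    _ = (M + (3 * ‖A‖) ^ 3 * Real.exp (3 * ‖A‖)) * |t| ^ 3 := by ring
end
end

section
/- Let skew : ℝ³ → M₃(ℝ) be the map with skew(ξ)x = ξ × x, let ω, ω̃ : ℝ³ → ℝ³ be Lipschitz maps such that ω̃(m) − ω(m) = σ(m) m for some function σ : ℝ³ → ℝ and all m ∈ ℝ³, and let m₀ ∈ ℝ³. Suppose Q, Q̃ : ℝ → M₃(ℝ) are differentiable curves with Q(0) = Q̃(0) = I satisfying Q'(t) = skew(ω(Q(t) m₀)) Q(t) and Q̃'(t) = skew(ω̃(Q̃(t) m₀)) Q̃(t). Then Q(t) m₀ = Q̃(t) m₀ for all t, even though the curves Q and Q̃ in the group may differ. -/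
open Matrix

noncomputable section

attribute [local instance] Matrix.normedAddCommGroup Matrix.normedSpace

/-!
The projection `μ t = Q t *ᵥ m₀` of a solution solves `μ' = ω(μ) × μ`, and the isotropy component
drops out of this equation because `(ω(m) + σ(m) m) × m = ω(m) × m`. So both projections solve the
same ODE from `m₀`. Its right-hand side is only locally Lipschitz, but it is orthogonal to `μ`, so
`|μ|` is conserved and solutions stay in a compact ball on which uniqueness applies.
-/

theorem skew3_mulVec (ξ x : Fin 3 → ℝ) : skew3 ξ *ᵥ x = ξ ⨯₃ x := by
  ext i
  fin_cases i <;> simp [skew3, cross_apply, mulVec, dotProduct, Fin.sum_univ_three] <;> ring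

theorem add_smul_self_cross {R : Type*} [CommRing R] (ξ m : Fin 3 → R) (c : R) :
    (ξ + c • m) ⨯₃ m = ξ ⨯₃ m := by
  simp [cross_self]

theorem norm_le_sqrt_dotProduct_self {ι : Type*} [Fintype ι] (x : ι → ℝ) :
    ‖x‖ ≤ √(x ⬝ᵥ x) := by
  refine (pi_norm_le_iff_of_nonneg (Real.sqrt_nonneg _)).2 fun i => ?_
  rw [Real.norm_eq_abs]
  refine Real.abs_le_sqrt ?_
  rw [sq]
  exact Finset.single_le_sum (f := fun j => x j * x j) (fun j _ => mul_self_nonneg (x j))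
    (Finset.mem_univ i)

theorem locallyLipschitz_cross_uncurry :
    LocallyLipschitz fun p : (Fin 3 → ℝ) × (Fin 3 → ℝ) => p.1 ⨯₃ p.2 := by
  let B : (Fin 3 → ℝ) →L[ℝ] (Fin 3 → ℝ) →L[ℝ] (Fin 3 → ℝ) :=
    LinearMap.toContinuousLinearMap (LinearMap.toContinuousLinearMap.toLinearMap ∘ₗ crossProduct)
  exact (B.isBoundedBilinearMap.contDiff (n := 1)).locallyLipschitz

theorem locallyLipschitz_cross {ω : (Fin 3 → ℝ) → (Fin 3 → ℝ)} (hω : LocallyLipschitz ω) :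
    LocallyLipschitz fun x => ω x ⨯₃ x :=
  locallyLipschitz_cross_uncurry.comp (g := fun x => (ω x, x)) (hω.prodMk LocallyLipschitz.id)

section Derivatives

variable {t : ℝ}

theorem HasDerivAt.dotProduct {ι : Type*} [Fintype ι] {f g : ℝ → ι → ℝ} {f' g' : ι → ℝ}
    (hf : HasDerivAt f f' t) (hg : HasDerivAt g g' t) :
    HasDerivAt (fun s => f s ⬝ᵥ g s) (f' ⬝ᵥ g t + f t ⬝ᵥ g') t := by
  have h := HasDerivAt.fun_sum (u := Finset.univ)
    fun i _ => (hasDerivAt_pi.1 hf i).fun_mul (hasDerivAt_pi.1 hg i)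
  simpa only [_root_.dotProduct, Finset.sum_add_distrib] using h

theorem HasDerivAt.mulVec_const {m n : Type*} [Fintype m] [Fintype n]
    {Q : ℝ → Matrix m n ℝ} {Q' : Matrix m n ℝ} (hQ : HasDerivAt Q Q' t) (v : n → ℝ) :
    HasDerivAt (fun s => Q s *ᵥ v) (Q' *ᵥ v) t := by
  let L : Matrix m n ℝ →L[ℝ] (m → ℝ) := LinearMap.toContinuousLinearMap ((mulVecBilin ℝ ℝ).flip v)
  exact L.hasFDerivAt.comp_hasDerivAt t hQ

theorem HasDerivAt.mulVec_of_skew3 {ω : (Fin 3 → ℝ) → (Fin 3 → ℝ)}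
    {Q : ℝ → Matrix (Fin 3) (Fin 3) ℝ} {m₀ : Fin 3 → ℝ}
    (hQ : HasDerivAt Q (skew3 (ω (Q t *ᵥ m₀)) * Q t) t) :
    HasDerivAt (fun s => Q s *ᵥ m₀) (ω (Q t *ᵥ m₀) ⨯₃ (Q t *ᵥ m₀)) t := by
  simpa only [← mulVec_mulVec, skew3_mulVec] using hQ.mulVec_const m₀

end Derivatives

theorem dotProduct_self_eq_of_hasDerivAt_cross {μ w : ℝ → Fin 3 → ℝ}
    (hμ : ∀ t, HasDerivAt μ (w t ⨯₃ μ t) t) (t s : ℝ) : μ t ⬝ᵥ μ t = μ s ⬝ᵥ μ s := by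
  have hderiv : ∀ t, HasDerivAt (fun s => μ s ⬝ᵥ μ s) 0 t := fun t => by
    simpa only [dotProduct_comm (w t ⨯₃ μ t), dot_cross_self, add_zero] using
      (hμ t).dotProduct (hμ t)
  exact is_const_of_deriv_eq_zero (fun t => (hderiv t).differentiableAt)
    (fun t => (hderiv t).deriv) t s

theorem eq_of_hasDerivAt_cross {ω : (Fin 3 → ℝ) → (Fin 3 → ℝ)} (hω : LocallyLipschitz ω)
    {μ ν : ℝ → Fin 3 → ℝ} (hμ : ∀ t, HasDerivAt μ (ω (μ t) ⨯₃ μ t) t)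
    (hν : ∀ t, HasDerivAt ν (ω (ν t) ⨯₃ ν t) t) {t₀ : ℝ} (h₀ : μ t₀ = ν t₀) : μ = ν := by
  let s := Metric.closedBall (0 : Fin 3 → ℝ) √(μ t₀ ⬝ᵥ μ t₀)
  obtain ⟨K, hK⟩ := ((locallyLipschitz_cross hω).locallyLipschitzOn (s := s)
    ).exists_lipschitzOnWith_of_compact (isCompact_closedBall _ _)
  have mem_ball {f : ℝ → Fin 3 → ℝ} (hf : ∀ t, HasDerivAt f (ω (f t) ⨯₃ f t) t)
      (hf₀ : f t₀ = μ t₀) (t : ℝ) : f t ∈ s := by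
    rw [mem_closedBall_zero_iff, ← hf₀, ← dotProduct_self_eq_of_hasDerivAt_cross hf t t₀]
    exact norm_le_sqrt_dotProduct_self (f t)
  exact ODE_solution_unique_univ (v := fun _ x => ω x ⨯₃ x) (s := fun _ => s)
    (fun _ => hK) (fun t => ⟨hμ t, mem_ball hμ rfl t⟩)
    (fun t => ⟨hν t, mem_ball hν h₀.symm t⟩) h₀

theorem isotropy_component_same_projection_general
    (ω ω' : (Fin 3 → ℝ) → (Fin 3 → ℝ)) (K : NNReal)
    (hω : LipschitzWith K ω)
    (σ : (Fin 3 → ℝ) → ℝ) (hσ : ∀ m : Fin 3 → ℝ, ω' m - ω m = σ m • m)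
    (m₀ : Fin 3 → ℝ)
    (Q Q' : ℝ → Matrix (Fin 3) (Fin 3) ℝ)
    (hQ0 : Q 0 = 1) (hQ'0 : Q' 0 = 1)
    (hQ : ∀ t : ℝ, HasDerivAt Q (skew3 (ω (Q t *ᵥ m₀)) * Q t) t)
    (hQ' : ∀ t : ℝ, HasDerivAt Q' (skew3 (ω' (Q' t *ᵥ m₀)) * Q' t) t) :
    ∀ t : ℝ, Q t *ᵥ m₀ = Q' t *ᵥ m₀ := by
  have hω'_cross (m : Fin 3 → ℝ) : ω' m ⨯₃ m = ω m ⨯₃ m := by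
    rw [← add_smul_self_cross (ω m) m (σ m), ← hσ m, add_sub_cancel]
  have hμ (t : ℝ) := (hQ t).mulVec_of_skew3
  have hν (t : ℝ) : HasDerivAt (fun s => Q' s *ᵥ m₀) (ω (Q' t *ᵥ m₀) ⨯₃ (Q' t *ᵥ m₀)) t :=
    hω'_cross _ ▸ (hQ' t).mulVec_of_skew3
  have h₀ : Q 0 *ᵥ m₀ = Q' 0 *ᵥ m₀ := by rw [hQ0, hQ'0]
  exact congrFun (eq_of_hasDerivAt_cross hω.locallyLipschitz hμ hν h₀)

/-- Two Lipschitz generators differing by an isotropy component `σ(m) m` define distinct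
ODEs `Q' = skew(ω(Q m₀)) Q` on the matrix group, but the projections `t ↦ Q t *ᵥ m₀` of
their solution curves coincide. -/
theorem isotropy_component_same_projection
    (ω ω' : (Fin 3 → ℝ) → (Fin 3 → ℝ)) (K K' : NNReal)
    (hω : LipschitzWith K ω) (hω' : LipschitzWith K' ω')
    (σ : (Fin 3 → ℝ) → ℝ) (hσ : ∀ m : Fin 3 → ℝ, ω' m - ω m = σ m • m)
    (m₀ : Fin 3 → ℝ)
    (Q Q' : ℝ → Matrix (Fin 3) (Fin 3) ℝ)
    (hQ0 : Q 0 = 1) (hQ'0 : Q' 0 = 1)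
    (hQ : ∀ t : ℝ, HasDerivAt Q (skew3 (ω (Q t *ᵥ m₀)) * Q t) t)
    (hQ' : ∀ t : ℝ, HasDerivAt Q' (skew3 (ω' (Q' t *ᵥ m₀)) * Q' t) t) :
    ∀ t : ℝ, Q t *ᵥ m₀ = Q' t *ᵥ m₀ :=
  isotropy_component_same_projection_general ω ω' K hω σ hσ m₀ Q Q' hQ0 hQ'0 hQ hQ'
end
end
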